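/- arXiv:1206.3786 — 2 statements merged into one kernel-verified Lean document; each statement's English description precedes it below -/
import Mathlib

section
/- Let N ≥ 1, 1 ≤ k ≤ N, and let p_1,…,p_N, q_1,…,q_{N−ℓ} be complex numbers (0 ≤ ℓ ≤ N−1, with k ≤ N−ℓ) such that all the p_i are pairwise distinct, all the q_j are pairwise distinct, and p_i ≠ q_j for all i, j. Then the rational function identity Σ_{I ⊂ {1,…,N}, |I|=k} ∏_{m∈I, n∉I} 1/(p_n − p_m) · ∏_{m∈I} ∏_{n=1}^{N−ℓ} 1/(p_m − q_n) = Σ_{J ⊂ {1,…,N−ℓ}, |J|=k} ∏_{m∈J, n∉J} 1/(q_m − q_n) · ∏_{m∈J} ∏_{n=1}^{N} 1/(p_n − q_m) holds. -/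
/-!
Write `P = {pᵢ}`, `Q = {qⱼ}` and induct on `k`, removing a point `x` from `P`. As functions of `x`,
both sides are expanded into partial fractions
`∏ c ∈ S, (x - c)⁻¹ = ∑ c ∈ S, w_S(c) (x - c)⁻¹`, with `w_S` Lagrange's nodal weights.
On the left, the poles at the points `c ∈ P` cancel between the subsets that contain `x` and
those that do not. On both sides, the residue at a point `c ∈ Q` is the same multiple of the
identity for `P \ {x}`, `Q \ {c}` and `k - 1`.
-/

open Finset Lagrange

theorem Lagrange.prod_inv_sub_eq_sum_nodalWeight_mul {F : Type*} [Field F] [DecidableEq F]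
    {s : Finset F} {x : F} (hs : s.Nonempty) (hx : x ∉ s) :
    ∏ y ∈ s, (x - y)⁻¹ = ∑ y ∈ s, nodalWeight s id y * (x - y)⁻¹ := by
  have h := eval_interpolate_not_at_node (x := x) (v := id) 1 fun y hy h => hx (h ▸ hy)
  simp only [interpolate_one (Set.injOn_id _) hs, Polynomial.eval_one, eval_nodal, Pi.one_apply,
    mul_one, id] at h
  rw [prod_inv_distrib]
  exact inv_eq_of_mul_eq_one_right h.symm

theorem Finset.prod_inv_sub_comm {K : Type*} [Field K] (s : Finset K) (x : K) :
    ∏ y ∈ s, (y - x)⁻¹ = (-1) ^ #s * ∏ y ∈ s, (x - y)⁻¹ := by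
  simp_rw [← neg_sub x, inv_neg]
  exact prod_neg _

section Reindex

variable {α M : Type*} [DecidableEq α] [AddCommMonoid M]

theorem Finset.sum_powersetCard_succ_sum_mem (s : Finset α) (k : ℕ) (f : α → Finset α → M) :
    ∑ I ∈ s.powersetCard (k + 1), ∑ c ∈ I, f c I =
      ∑ c ∈ s, ∑ I ∈ (s.erase c).powersetCard k, f c (insert c I) := by
  rw [sum_sigma', sum_sigma']
  refine sum_nbij' (fun a => ⟨a.2, a.1.erase a.2⟩) (fun a => ⟨insert a.1 a.2, a.1⟩)
    ?_ ?_ ?_ ?_ ?_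
  · rintro ⟨I, c⟩ h
    simp only [mem_sigma, mem_powersetCard] at h ⊢
    refine ⟨h.1.1 h.2, erase_subset_erase c h.1.1, ?_⟩
    rw [card_erase_of_mem h.2, h.1.2, Nat.add_sub_cancel]
  · rintro ⟨c, I⟩ h
    simp only [mem_sigma, mem_powersetCard, subset_erase] at h ⊢
    exact ⟨⟨insert_subset h.1 h.2.1.1, by rw [card_insert_of_notMem h.2.1.2, h.2.2]⟩,
      mem_insert_self c I⟩
  · rintro ⟨I, c⟩ h
    simp only [mem_sigma] at h
    simp [insert_erase h.2]
  · rintro ⟨c, I⟩ h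
    simp only [mem_sigma, mem_powersetCard, subset_erase] at h
    simp [erase_insert h.2.1.2]
  · rintro ⟨I, c⟩ h
    simp only [mem_sigma] at h
    simp [insert_erase h.2]

theorem Finset.sum_powersetCard_sum_sdiff (s : Finset α) (k : ℕ) (f : α → Finset α → M) :
    ∑ I ∈ s.powersetCard k, ∑ c ∈ s \ I, f c I =
      ∑ c ∈ s, ∑ I ∈ (s.erase c).powersetCard k, f c I := by
  refine sum_comm' fun I c => ?_
  simp only [mem_powersetCard, mem_sdiff, subset_erase]
  tauto

end Reindex

namespace RationalIdentity

variable {K : Type*} [Field K] [DecidableEq K] {P Q I : Finset K} {x c : K}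

-- The two sides of the identity, with the index sets replaced by the sets of values `P` and `Q`.
def termP (P Q I : Finset K) : K :=
  (∏ m ∈ I, ∏ n ∈ P \ I, (n - m)⁻¹) * ∏ m ∈ I, ∏ n ∈ Q, (m - n)⁻¹

def sumP (P Q : Finset K) (k : ℕ) : K :=
  ∑ I ∈ P.powersetCard k, termP P Q I

def termQ (P Q J : Finset K) : K :=
  (∏ m ∈ J, ∏ n ∈ Q \ J, (m - n)⁻¹) * ∏ m ∈ J, ∏ n ∈ P, (n - m)⁻¹

def sumQ (P Q : Finset K) (k : ℕ) : K :=
  ∑ J ∈ Q.powersetCard k, termQ P Q J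

theorem termP_insert_of_notMem (hxP : x ∉ P) (hI : I ⊆ P) :
    termP (insert x P) Q I = termP P Q I * ∏ m ∈ I, (x - m)⁻¹ := by
  have hxPI : x ∉ P \ I := fun h => hxP (mem_sdiff.1 h).1
  rw [termP, termP, insert_sdiff_of_notMem _ fun h => hxP (hI h)]
  simp_rw [prod_insert hxPI, prod_mul_distrib]
  ring

theorem termQ_insert_of_notMem (hxP : x ∉ P) :
    termQ (insert x P) Q I = termQ P Q I * ∏ m ∈ I, (x - m)⁻¹ := by
  simp_rw [termQ, prod_insert hxP, prod_mul_distrib]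
  ring

theorem termP_insert_insert (hxP : x ∉ P) (hI : I ⊆ P) (hPQ : Disjoint P Q) :
    termP (insert x P) Q (insert x I) =
      (-1) ^ #(P \ I) * termP P Q I * ∏ n ∈ (P \ I) ∪ Q, (x - n)⁻¹ := by
  have hxI : x ∉ I := fun h => hxP (hI h)
  rw [termP, termP, insert_sdiff_insert, sdiff_insert_of_notMem hxP, prod_insert hxI,
    prod_insert hxI, prod_inv_sub_comm, prod_union (hPQ.mono_left sdiff_subset)]
  ring

theorem termP_insert_mul_nodalWeight_add_eq_zero (hc : c ∈ P) (hcI : c ∉ I)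
    (hPQ : Disjoint P Q) :
    termP P Q (insert c I) * nodalWeight (insert c I) id c +
      (-1) ^ #(P \ I) * termP P Q I * nodalWeight ((P \ I) ∪ Q) id c = 0 := by
  obtain ⟨S, hcS, hPI⟩ : ∃ S, c ∉ S ∧ P \ I = insert c S :=
    ⟨_, notMem_erase c _, (insert_erase (mem_sdiff.2 ⟨hc, hcI⟩)).symm⟩
  have hPcI : P \ insert c I = S := by rw [sdiff_insert, hPI, erase_insert hcS]
  have hSQ : Disjoint S Q := hPcI ▸ hPQ.mono_left sdiff_subset
  have hcQ : c ∉ Q := disjoint_left.1 hPQ hc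
  have hcSQ : c ∉ S ∪ Q := by simp [hcS, hcQ]
  simp only [termP, nodalWeight, id, hPI, hPcI, insert_union, erase_insert hcSQ, erase_insert hcI,
    prod_insert hcI, prod_insert hcS, prod_union hSQ, prod_mul_distrib, card_insert_of_notMem hcS]
  rw [prod_inv_sub_comm S c]
  ring

theorem neg_one_pow_mul_termP_mul_nodalWeight (hc : c ∈ Q) (hI : I ⊆ P) (hPQ : Disjoint P Q) :
    (-1) ^ #(P \ I) * termP P Q I * nodalWeight ((P \ I) ∪ Q) id c =
      nodalWeight Q id c * (∏ n ∈ P, (n - c)⁻¹) * termP P (Q.erase c) I := by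
  have hcPI : c ∉ P \ I := fun h => disjoint_right.1 hPQ hc (mem_sdiff.1 h).1
  have hSQ : Disjoint (P \ I) (Q.erase c) :=
    (hPQ.mono_left sdiff_subset).mono_right (erase_subset _ _)
  simp only [termP, nodalWeight, id, erase_union_distrib, erase_eq_of_notMem hcPI,
    prod_union hSQ]
  simp_rw [← mul_prod_erase Q _ hc, prod_mul_distrib]
  rw [← prod_sdiff hI, prod_inv_sub_comm (P \ I) c]
  ring

theorem termQ_insert_mul_nodalWeight (hcI : c ∉ I) (hI : I ⊆ Q) :
    termQ P Q (insert c I) * nodalWeight (insert c I) id c =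
      nodalWeight Q id c * (∏ n ∈ P, (n - c)⁻¹) * termQ P (Q.erase c) I := by
  have hQI : Q \ insert c I = Q.erase c \ I := by rw [sdiff_insert, erase_sdiff_comm]
  simp only [termQ, nodalWeight, id, hQI, erase_insert hcI, prod_insert hcI]
  rw [← prod_sdiff (subset_erase.2 ⟨hI, hcI⟩)]
  ring

variable (k : ℕ)

theorem sumQ_insert (hxP : x ∉ P) (hxQ : x ∉ Q) :
    sumQ (insert x P) Q (k + 1) =
      ∑ c ∈ Q, nodalWeight Q id c * (∏ n ∈ P, (n - c)⁻¹) * (x - c)⁻¹ * sumQ P (Q.erase c) k := by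
  have expand : ∀ J ∈ Q.powersetCard (k + 1), termQ (insert x P) Q J =
      ∑ c ∈ J, termQ P Q J * nodalWeight J id c * (x - c)⁻¹ := by
    intro J hJ
    obtain ⟨hJQ, hJk⟩ := mem_powersetCard.1 hJ
    rw [termQ_insert_of_notMem hxP, prod_inv_sub_eq_sum_nodalWeight_mul
      (card_pos.1 (hJk ▸ k.succ_pos)) fun h => hxQ (hJQ h), mul_sum]
    simp_rw [mul_assoc]
  rw [sumQ, sum_congr rfl expand, sum_powersetCard_succ_sum_mem]
  refine sum_congr rfl fun c hc => ?_
  rw [sumQ, mul_sum]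
  refine sum_congr rfl fun J hJ => ?_
  obtain ⟨hJQ, -⟩ := mem_powersetCard.1 hJ
  rw [termQ_insert_mul_nodalWeight (subset_erase.1 hJQ).2 (subset_erase.1 hJQ).1]
  ring

theorem sum_termP_insert_of_notMem (hxP : x ∉ P) :
    ∑ I ∈ P.powersetCard (k + 1), termP (insert x P) Q I =
      ∑ c ∈ P, ∑ I ∈ (P.erase c).powersetCard k,
        termP P Q (insert c I) * nodalWeight (insert c I) id c * (x - c)⁻¹ := by
  have expand : ∀ I ∈ P.powersetCard (k + 1), termP (insert x P) Q I =
      ∑ c ∈ I, termP P Q I * nodalWeight I id c * (x - c)⁻¹ := by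
    intro I hI
    obtain ⟨hIP, hIk⟩ := mem_powersetCard.1 hI
    rw [termP_insert_of_notMem hxP hIP, prod_inv_sub_eq_sum_nodalWeight_mul
      (card_pos.1 (hIk ▸ k.succ_pos)) fun h => hxP (hIP h), mul_sum]
    simp_rw [mul_assoc]
  rw [sum_congr rfl expand, sum_powersetCard_succ_sum_mem]

theorem sum_termP_insert_insert (hxP : x ∉ P) (hxQ : x ∉ Q) (hPQ : Disjoint P Q)
    (hQ : Q.Nonempty) :
    ∑ I ∈ P.powersetCard k, termP (insert x P) Q (insert x I) =
      ∑ c ∈ P, ∑ I ∈ (P.erase c).powersetCard k,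
          (-1) ^ #(P \ I) * termP P Q I * nodalWeight ((P \ I) ∪ Q) id c * (x - c)⁻¹ +
        ∑ c ∈ Q, nodalWeight Q id c * (∏ n ∈ P, (n - c)⁻¹) * (x - c)⁻¹ *
          sumP P (Q.erase c) k := by
  have expand : ∀ I ∈ P.powersetCard k, termP (insert x P) Q (insert x I) =
      ∑ c ∈ P \ I, (-1) ^ #(P \ I) * termP P Q I * nodalWeight ((P \ I) ∪ Q) id c * (x - c)⁻¹ +
        ∑ c ∈ Q, (-1) ^ #(P \ I) * termP P Q I * nodalWeight ((P \ I) ∪ Q) id c *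
          (x - c)⁻¹ := by
    intro I hI
    have hIP := (mem_powersetCard.1 hI).1
    have hxPIQ : x ∉ (P \ I) ∪ Q := by simp [hxP, hxQ]
    rw [termP_insert_insert hxP hIP hPQ, prod_inv_sub_eq_sum_nodalWeight_mul
      (hQ.mono subset_union_right) hxPIQ, mul_sum, ← sum_union (hPQ.mono_left sdiff_subset)]
    simp_rw [mul_assoc]
  rw [sum_congr rfl expand, sum_add_distrib, sum_powersetCard_sum_sdiff, sum_comm (t := Q)]
  congr 1
  refine sum_congr rfl fun c hc => ?_
  rw [sumP, mul_sum]
  refine sum_congr rfl fun I hI => ?_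
  rw [neg_one_pow_mul_termP_mul_nodalWeight hc (mem_powersetCard.1 hI).1 hPQ]
  ring

theorem sumP_insert (hxP : x ∉ P) (hxQ : x ∉ Q) (hPQ : Disjoint P Q) (hQ : Q.Nonempty) :
    sumP (insert x P) Q (k + 1) =
      ∑ c ∈ Q, nodalWeight Q id c * (∏ n ∈ P, (n - c)⁻¹) * (x - c)⁻¹ * sumP P (Q.erase c) k := by
  have hinj : Set.InjOn (insert x) (P.powersetCard k : Set (Finset K)) :=
    fun I hI J hJ h => by
      rw [← erase_insert fun hx => hxP ((mem_powersetCard.1 hI).1 hx), h,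
        erase_insert fun hx => hxP ((mem_powersetCard.1 hJ).1 hx)]
  have hdisj : Disjoint (P.powersetCard (k + 1)) ((P.powersetCard k).image (insert x)) := by
    simp only [disjoint_right, mem_image, mem_powersetCard]
    rintro _ ⟨I, -, rfl⟩ ⟨hxI, -⟩
    exact hxP (hxI (mem_insert_self x I))
  rw [sumP, powersetCard_succ_insert hxP, sum_union hdisj, sum_image hinj,
    sum_termP_insert_of_notMem k hxP, sum_termP_insert_insert k hxP hxQ hPQ hQ, ← add_assoc,
    ← sum_add_distrib, sum_eq_zero, zero_add]
  refine fun c hc => sum_add_distrib.symm.trans (sum_eq_zero fun I hI => ?_)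
  have hcI : c ∉ I := fun h => (mem_erase.1 ((mem_powersetCard.1 hI).1 h)).1 rfl
  rw [← add_mul, termP_insert_mul_nodalWeight_add_eq_zero hc hcI hPQ, zero_mul]

theorem sumP_eq_sumQ (hPQ : Disjoint P Q) (hkP : k ≤ #P) (hkQ : k ≤ #Q) :
    sumP P Q k = sumQ P Q k := by
  induction k generalizing P Q with
  | zero => simp [sumP, sumQ, termP, termQ]
  | succ k ih =>
    obtain ⟨x, hx⟩ := card_pos.1 (k.succ_pos.trans_le hkP)
    have hP' : x ∉ P.erase x := notMem_erase x P
    have hP'Q : Disjoint (P.erase x) Q := hPQ.mono_left (erase_subset x P)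
    have hQ : Q.Nonempty := card_pos.1 (k.succ_pos.trans_le hkQ)
    rw [← insert_erase hx, sumP_insert k hP' (disjoint_left.1 hPQ hx) hP'Q hQ,
      sumQ_insert k hP' (disjoint_left.1 hPQ hx)]
    refine sum_congr rfl fun c hc => ?_
    rw [ih (hP'Q.mono_right (erase_subset c Q))]
    · rw [card_erase_of_mem hx]; omega
    · rw [card_erase_of_mem hc]; omega

end RationalIdentity

open RationalIdentity in
theorem rational_functional_identity_general (N ℓ k : ℕ) (hk : k ≤ N - ℓ)
    (p : Fin N → ℂ) (q : Fin (N - ℓ) → ℂ)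
    (hp : Function.Injective p) (hq : Function.Injective q)
    (hpq : ∀ i j, p i ≠ q j) :
    ∑ I ∈ Finset.powersetCard k (Finset.univ : Finset (Fin N)),
      ((∏ m ∈ I, ∏ n ∈ Iᶜ, (p n - p m)⁻¹) *
        ∏ m ∈ I, ∏ n : Fin (N - ℓ), (p m - q n)⁻¹)
    = ∑ J ∈ Finset.powersetCard k (Finset.univ : Finset (Fin (N - ℓ))),
      ((∏ m ∈ J, ∏ n ∈ Jᶜ, (q m - q n)⁻¹) *
        ∏ m ∈ J, ∏ n : Fin N, (p n - q m)⁻¹) := by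
  let P := univ.map ⟨p, hp⟩
  let Q := univ.map ⟨q, hq⟩
  have hPQ : Disjoint P Q := by
    simpa [P, Q, disjoint_left] using fun i j => (hpq i j).symm
  have h := sumP_eq_sumQ k hPQ (by simp [P]; omega) (by simpa [Q] using hk)
  simpa [sumP, sumQ, termP, termQ, P, Q, powersetCard_map, ← Finset.map_sdiff,
    compl_eq_univ_sdiff] using h

/-- The rational functional identities (4.97) relating `N` variables `p` to
`N - ℓ` variables `q`. -/
theorem rational_functional_identity (N ℓ k : ℕ) (hN : 1 ≤ N) (hℓ : ℓ ≤ N - 1)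
    (hk1 : 1 ≤ k) (hk : k ≤ N - ℓ)
    (p : Fin N → ℂ) (q : Fin (N - ℓ) → ℂ)
    (hp : Function.Injective p) (hq : Function.Injective q)
    (hpq : ∀ i j, p i ≠ q j) :
    ∑ I ∈ Finset.powersetCard k (Finset.univ : Finset (Fin N)),
      ((∏ m ∈ I, ∏ n ∈ Iᶜ, (p n - p m)⁻¹) *
        ∏ m ∈ I, ∏ n : Fin (N - ℓ), (p m - q n)⁻¹)
    = ∑ J ∈ Finset.powersetCard k (Finset.univ : Finset (Fin (N - ℓ))),
      ((∏ m ∈ J, ∏ n ∈ Jᶜ, (q m - q n)⁻¹) *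
        ∏ m ∈ J, ∏ n : Fin N, (p n - q m)⁻¹) :=
  rational_functional_identity_general N ℓ k hk p q hp hq hpq
end

section
/- Let z_1,…,z_N be complex numbers with sinh(z_j − z_n) ≠ 0 for all j ≠ n, and define the N×N matrix Q by Q_{jj} = −Σ_{n≠j} coth(z_j − z_n) and Q_{jk} = 1/sinh(z_j − z_k) for j ≠ k. Then the eigenvalues of Q (with multiplicity) are exactly −N+1, −N+3, …, N−1, i.e., the characteristic polynomial of Q equals ∏_{m=1}^{N} (λ − (2m − 1 − N)). -/
open Finset Polynomial

/-!
Put `x j = exp (2 * z j)`. Conjugating `Q` by `diag (exp (z j))` turns it into a matrix `R` with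
rational entries in the `x j`, and multiplying by the Vandermonde matrix `V` of `x` triangularises
it: `R * V = V * T`, where `T` is upper triangular with diagonal `2 m + 1 - N` and power sums of `x`
above the diagonal (this is the identity
`(2 b^(m+1) - (a + b) a^m) / (a - b) = -a^m - 2 ∑_{i<m} a^i b^(m-i)`, summed over the columns).
The hypothesis `sinh (z j - z n) ≠ 0` says exactly that the `x j` are distinct, so `V` is
invertible and `Q` is similar to `T`.
-/

theorem Matrix.charpoly_eq_of_mul_eq_mul {n R : Type*} [Fintype n] [DecidableEq n] [CommRing R]
    {A B P : Matrix n n R} (hP : IsUnit P.det) (h : A * P = P * B) :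
    A.charpoly = B.charpoly := by
  have hA : A = P * (B * P⁻¹) := by
    rw [← Matrix.mul_assoc, ← h, Matrix.mul_nonsing_inv_cancel_right _ _ hP]
  rw [hA, Matrix.charpoly_mul_comm, Matrix.mul_assoc, Matrix.nonsing_inv_mul _ hP,
    Matrix.mul_one]

section RationalModel

variable {K : Type*} [Field K] {N : ℕ}

theorem sum_pow_mul_pow_sub_mul_sub (a b : K) (m : ℕ) :
    (∑ i ∈ range m, a ^ i * b ^ (m - i)) * (a - b) = b * (a ^ m - b ^ m) := by
  rw [← geom_sum₂_mul, ← mul_assoc, Finset.mul_sum]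
  congr 1
  refine Finset.sum_congr rfl fun i hi => ?_
  rw [show m - i = m - 1 - i + 1 by have := mem_range.mp hi; omega, pow_succ]
  ring

theorem two_mul_pow_succ_sub_add_mul_pow_div_sub (a b : K) (hab : a ≠ b) (m : ℕ) :
    (2 * b ^ (m + 1) - (a + b) * a ^ m) / (a - b) =
      -a ^ m - 2 * ∑ i ∈ range m, a ^ i * b ^ (m - i) := by
  rw [div_eq_iff (sub_ne_zero.mpr hab)]
  linear_combination 2 * sum_pow_mul_pow_sub_mul_sub a b m

variable (x : Fin N → K)

def powerSum (s : ℕ) : K := ∑ n, x n ^ s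

def rationalQ : Matrix (Fin N) (Fin N) K := Matrix.of fun j k =>
  if j = k then -∑ n ∈ univ.erase j, (x j + x n) / (x j - x n) else 2 * x k / (x j - x k)

def powerSumTriangular : Matrix (Fin N) (Fin N) K := Matrix.of fun i m =>
  if i = m then 2 * ((m : ℕ) : K) + 1 - N
  else if i < m then -2 * powerSum x (m - i) else 0

theorem rationalQ_mul_vandermonde_apply (j m : Fin N) :
    (rationalQ x * Matrix.vandermonde x) j m =
      ∑ n ∈ univ.erase j,
        (2 * x n ^ ((m : ℕ) + 1) - (x j + x n) * x j ^ (m : ℕ)) / (x j - x n) := by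
  rw [Matrix.mul_apply, ← Finset.add_sum_erase _ _ (mem_univ j)]
  simp only [rationalQ, Matrix.vandermonde, Matrix.of_apply, if_true, neg_mul, Finset.sum_mul]
  rw [← sub_eq_neg_add, ← Finset.sum_sub_distrib]
  refine Finset.sum_congr rfl fun n hn => ?_
  rw [if_neg (Finset.ne_of_mem_erase hn).symm]
  ring

theorem sum_erase_neg_pow_sub_two_mul_sum (j : Fin N) (m : ℕ) :
    ∑ n ∈ univ.erase j, (-x j ^ m - 2 * ∑ i ∈ range m, x j ^ i * x n ^ (m - i)) =
      (2 * m + 1 - N) * x j ^ m - 2 * ∑ i ∈ range m, x j ^ i * powerSum x (m - i) := by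
  have diag : ∑ i ∈ range m, x j ^ i * x j ^ (m - i) = m * x j ^ m := by
    rw [Finset.sum_congr rfl fun i hi => by
      rw [← pow_add, Nat.add_sub_cancel' (mem_range.mp hi).le]]
    simp
  rw [Finset.sum_erase_eq_sub (mem_univ j), Finset.sum_sub_distrib, ← Finset.mul_sum,
    Finset.sum_comm, diag]
  simp only [powerSum, Finset.mul_sum, sum_const, card_univ, Fintype.card_fin, nsmul_eq_mul]
  ring

theorem vandermonde_mul_powerSumTriangular_apply (j m : Fin N) :
    (Matrix.vandermonde x * powerSumTriangular x) j m =
      (2 * (m : ℕ) + 1 - N) * x j ^ (m : ℕ) -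
        2 * ∑ i ∈ range m, x j ^ i * powerSum x (m - i) := by
  have split (i : ℕ) : x j ^ i * (if i = m then 2 * ((m : ℕ) : K) + 1 - N
      else if i < m then -2 * powerSum x (m - i) else 0) =
      (if i = m then (2 * (m : ℕ) + 1 - N) * x j ^ (m : ℕ) else 0) +
        if i < m then -2 * (x j ^ i * powerSum x (m - i)) else 0 := by
    split_ifs <;> first | omega | (subst_vars; ring)
  have lower : (range N).filter (· < (m : ℕ)) = range m := by
    ext i; simp only [mem_filter, mem_range]; omega
  simp only [Matrix.mul_apply, Matrix.vandermonde, powerSumTriangular, Matrix.of_apply,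
    Fin.ext_iff, Fin.lt_def, split, sum_add_distrib]
  rw [Fin.sum_univ_eq_sum_range (fun i => if i = (m : ℕ) then _ else 0),
    Fin.sum_univ_eq_sum_range
      (fun i => if i < (m : ℕ) then -2 * (x j ^ i * powerSum x (m - i)) else 0),
    sum_ite_eq', if_pos (mem_range.mpr m.isLt), ← sum_filter, lower, ← mul_sum]
  ring

theorem rationalQ_mul_vandermonde (hx : Function.Injective x) :
    rationalQ x * Matrix.vandermonde x = Matrix.vandermonde x * powerSumTriangular x := by
  ext j m
  rw [rationalQ_mul_vandermonde_apply, vandermonde_mul_powerSumTriangular_apply,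
    ← sum_erase_neg_pow_sub_two_mul_sum]
  exact Finset.sum_congr rfl fun n hn =>
    two_mul_pow_succ_sub_add_mul_pow_div_sub _ _ (hx.ne (Finset.ne_of_mem_erase hn).symm) _

theorem charpoly_powerSumTriangular :
    (powerSumTriangular x).charpoly = ∏ m ∈ range N, (X - C (2 * (m : K) + 1 - N)) := by
  rw [Matrix.charpoly_of_isUpperTriangular, ← Fin.prod_univ_eq_prod_range]
  · simp [powerSumTriangular]
  · intro i m (hmi : m < i)
    simp [powerSumTriangular, hmi.ne', hmi.not_gt]

theorem charpoly_rationalQ (hx : Function.Injective x) :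
    (rationalQ x).charpoly = ∏ m ∈ range N, (X - C (2 * (m : K) + 1 - N)) := by
  rw [Matrix.charpoly_eq_of_mul_eq_mul _ (rationalQ_mul_vandermonde x hx),
    charpoly_powerSumTriangular]
  exact (Matrix.det_vandermonde_ne_zero_iff.mpr hx).isUnit

end RationalModel

namespace Complex

theorem sinh_sub_eq_div (a b : ℂ) :
    sinh (a - b) = (exp (2 * a) - exp (2 * b)) / (2 * exp a * exp b) := by
  rw [sinh, neg_sub, exp_sub, exp_sub, two_mul a, two_mul b, exp_add, exp_add]
  field_simp

theorem cosh_sub_eq_div (a b : ℂ) :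
    cosh (a - b) = (exp (2 * a) + exp (2 * b)) / (2 * exp a * exp b) := by
  rw [cosh, neg_sub, exp_sub, exp_sub, two_mul a, two_mul b, exp_add, exp_add]
  field_simp

theorem cosh_sub_div_sinh_sub (a b : ℂ) :
    cosh (a - b) / sinh (a - b) =
      (exp (2 * a) + exp (2 * b)) / (exp (2 * a) - exp (2 * b)) := by
  rw [cosh_sub_eq_div, sinh_sub_eq_div, div_div_div_cancel_right₀ (by simp [exp_ne_zero])]

theorem inv_sinh_sub (a b : ℂ) :
    (sinh (a - b))⁻¹ = 2 * exp a * exp b / (exp (2 * a) - exp (2 * b)) := by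
  rw [sinh_sub_eq_div, inv_div]

end Complex

open Complex in
theorem exp_two_mul_injective_of_sinh_sub_ne_zero {N : ℕ} {z : Fin N → ℂ}
    (hz : ∀ j n : Fin N, j ≠ n → sinh (z j - z n) ≠ 0) :
    Function.Injective fun j => exp (2 * z j) := by
  intro j n (h : exp (2 * z j) = exp (2 * z n))
  by_contra hjn
  exact hz j n hjn (by rw [sinh_sub_eq_div, h, sub_self, zero_div])

noncomputable def hyperbolicQ {N : ℕ} (z : Fin N → ℂ) : Matrix (Fin N) (Fin N) ℂ :=
  Matrix.of fun j k : Fin N =>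
    if j = k then
      -(∑ n ∈ Finset.univ.erase j, Complex.cosh (z j - z n) / Complex.sinh (z j - z n))
    else (Complex.sinh (z j - z k))⁻¹

open Complex in
theorem hyperbolicQ_mul_diagonal_exp {N : ℕ} (z : Fin N → ℂ) :
    hyperbolicQ z * Matrix.diagonal (exp ∘ z) =
      Matrix.diagonal (exp ∘ z) * rationalQ fun j => exp (2 * z j) := by
  ext j k
  simp only [hyperbolicQ, rationalQ, Matrix.mul_diagonal, Matrix.diagonal_mul, Matrix.of_apply,
    Function.comp_apply, cosh_sub_div_sinh_sub]
  split_ifs with hjk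
  · subst hjk; ring
  · rw [inv_sinh_sub, two_mul (z k), exp_add]; ring

/-- Corollary 4.4: the matrix `Q` with `Q_{jj} = -Σ_{n≠j} coth(z_j - z_n)` and
`Q_{jk} = 1/sinh(z_j - z_k)` for `j ≠ k` has spectrum `{-N+1, -N+3, …, N-1}`:
its characteristic polynomial is `∏_{m=0}^{N-1} (λ - (2m + 1 - N))`. -/
theorem Q_spectrum (N : ℕ) (z : Fin N → ℂ)
    (hz : ∀ j n : Fin N, j ≠ n → Complex.sinh (z j - z n) ≠ 0) :
    Matrix.charpoly (Matrix.of fun j k : Fin N =>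
      if j = k then
        -(∑ n ∈ Finset.univ.erase j, Complex.cosh (z j - z n) / Complex.sinh (z j - z n))
      else (Complex.sinh (z j - z k))⁻¹)
    = ∏ m ∈ Finset.range N, (Polynomial.X - Polynomial.C ((2 * (m : ℂ) + 1 - (N : ℂ)))) := by
  have hW : IsUnit (Matrix.diagonal (Complex.exp ∘ z)).det := by
    simp [Matrix.det_diagonal, Finset.prod_ne_zero_iff, Complex.exp_ne_zero]
  show (hyperbolicQ z).charpoly = _
  rw [Matrix.charpoly_eq_of_mul_eq_mul hW (hyperbolicQ_mul_diagonal_exp z),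
    charpoly_rationalQ _ (exp_two_mul_injective_of_sinh_sub_ne_zero hz)]
end
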